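/- Let k be a field of characteristic zero and R a commutative k-algebra. Let ξ_1,…,ξ_r be pairwise commuting k-derivations of R such that for every g ∈ R there exists N ∈ ℕ with ξ_1^{n_1} ∘ ⋯ ∘ ξ_r^{n_r}(g) = 0 whenever n_1 + ⋯ + n_r > N. Suppose f_1,…,f_r ∈ R satisfy ξ_i(f_j) = δ_{ij} for all 1 ≤ i,j ≤ r. Let R_0 := {g ∈ R : ξ_i(g) = 0 for all i}, a k-subalgebra of R. Then the R_0-algebra homomorphism R_0[t_1,…,t_r] → R sending t_i to f_i is an isomorphism; in particular f_1,…,f_r are algebraically independent over R_0 and R = R_0[f_1,…,f_r]. -/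
import Mathlib


/-!
Statement 6: a set of commuting locally nilpotent derivations `ξ_1, …, ξ_r` with
`ξ_i f_j = δ_ij` makes `R` a polynomial ring over the joint kernel `R₀`.
`iterD ξ n` is the composite `ξ_1^{n_1} ∘ ⋯ ∘ ξ_r^{n_r}`.
-/

noncomputable section

variable {k R : Type*} [Field k] [CharZero k] [CommRing R] [Algebra k R]

/-- The composite `ξ_1^{n_1} ∘ ⋯ ∘ ξ_r^{n_r}`. -/
def iterD {r : ℕ} (ξ : Fin r → Derivation k R R) (n : Fin r → ℕ) : R → R :=
  (List.ofFn fun i => (⇑(ξ i))^[n i]).foldr (· ∘ ·) id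

/-- The joint kernel `R₀ = {g ∈ R : ξ_i g = 0 for all i}`, a `k`-subalgebra. -/
def jointKernel {r : ℕ} (ξ : Fin r → Derivation k R R) : Subalgebra k R where
  carrier := {g | ∀ i, ξ i g = 0}
  mul_mem' := fun {a b} ha hb i => by
    rw [Derivation.leibniz]
    simp [ha i, hb i]
  one_mem' := fun i => by simp
  add_mem' := fun {a b} ha hb i => by simp [ha i, hb i]
  zero_mem' := fun i => by simp
  algebraMap_mem' := fun c i => by simp

set_option linter.unusedSectionVars false

lemma iterD_nil (ξ : Fin 0 → Derivation k R R) (n : Fin 0 → ℕ) : iterD ξ n = id := by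
  simp [iterD]

lemma iterD_succ {r : ℕ} (ξ : Fin (r+1) → Derivation k R R) (n : Fin (r+1) → ℕ) :
    iterD ξ n = (⇑(ξ 0))^[n 0] ∘ iterD (fun i => ξ i.succ) (fun i => n i.succ) := by
  simp [iterD, List.ofFn_succ]

lemma iter_map_add (D : Derivation k R R) (p : ℕ) (x y : R) :
    (⇑D)^[p] (x + y) = (⇑D)^[p] x + (⇑D)^[p] y := by
  induction p generalizing x y with
  | zero => rfl
  | succ p ih => simp [Function.iterate_succ_apply, map_add, ih]

lemma iter_map_zero (D : Derivation k R R) (p : ℕ) : (⇑D)^[p] (0 : R) = 0 := by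
  induction p with
  | zero => rfl
  | succ p ih => simp [Function.iterate_succ_apply, ih]

lemma iter_map_neg (D : Derivation k R R) (p : ℕ) (x : R) : (⇑D)^[p] (-x) = -(⇑D)^[p] x := by
  induction p generalizing x with
  | zero => rfl
  | succ p ih => simp [Function.iterate_succ_apply, ih]

lemma iter_map_nsmul (D : Derivation k R R) (p q : ℕ) (x : R) :
    (⇑D)^[p] (q • x) = q • (⇑D)^[p] x := by
  induction q with
  | zero => simp [iter_map_zero]
  | succ q ih => simp only [succ_nsmul, iter_map_add, ih]

lemma comm_iter (D E : Derivation k R R) (h : ∀ x, D (E x) = E (D x)) (p : ℕ) (x : R) :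
    D ((⇑E)^[p] x) = (⇑E)^[p] (D x) := by
  induction p generalizing x with
  | zero => rfl
  | succ p ih => rw [Function.iterate_succ_apply, Function.iterate_succ_apply, ih, h]

lemma D_prod_zero {ι : Type*} (D : Derivation k R R) (s : Finset ι) (g : ι → R)
    (h : ∀ i ∈ s, D (g i) = 0) : D (∏ i ∈ s, g i) = 0 := by
  induction s using Finset.cons_induction with
  | empty => simp
  | cons a s ha ih =>
    rw [Finset.prod_cons, Derivation.leibniz, h a (Finset.mem_cons_self a s),
      ih (fun i hi => h i (Finset.mem_cons_of_mem hi))]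
    simp

lemma D_pow_zero (D : Derivation k R R) (a : R) (ha : D a = 0) (q : ℕ) : D (a ^ q) = 0 := by
  rw [Derivation.leibniz_pow, ha]; simp

lemma iter_single (D : Derivation k R R) {a c : R} (hc : D c = 0) (ha : D a = 1)
    (q p : ℕ) : (⇑D)^[p] (c * a ^ q) = q.descFactorial p • (c * a ^ (q - p)) := by
  induction p generalizing q with
  | zero => simp
  | succ p ih =>
    have hD : D (c * a ^ q) = q • (c * a ^ (q - 1)) := by
      rw [Derivation.leibniz, Derivation.leibniz_pow, hc, ha]
      simp only [smul_eq_mul, mul_one, smul_zero, add_zero, nsmul_eq_mul]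
      ring
    rw [Function.iterate_succ_apply, hD, iter_map_nsmul, ih, smul_smul]
    have h1 : q * (q - 1).descFactorial p = q.descFactorial (p + 1) := by
      cases q with
      | zero => simp
      | succ q => rw [Nat.succ_descFactorial_succ]; simp
    have h2 : q - 1 - p = q - (p + 1) := by omega
    rw [h1, h2]

lemma iterD_add {r : ℕ} (ξ : Fin r → Derivation k R R) (n : Fin r → ℕ) (x y : R) :
    iterD ξ n (x + y) = iterD ξ n x + iterD ξ n y := by
  induction r with
  | zero => rfl
  | succ r ih =>
    rw [iterD_succ]
    simp only [Function.comp_apply, ih, iter_map_add]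

lemma iterD_zero_apply {r : ℕ} (ξ : Fin r → Derivation k R R) (n : Fin r → ℕ) :
    iterD ξ n (0 : R) = 0 := by
  induction r with
  | zero => rfl
  | succ r ih =>
    rw [iterD_succ]
    simp only [Function.comp_apply, ih, iter_map_zero]

lemma iterD_neg {r : ℕ} (ξ : Fin r → Derivation k R R) (n : Fin r → ℕ) (x : R) :
    iterD ξ n (-x) = -iterD ξ n x := by
  induction r with
  | zero => rfl
  | succ r ih =>
    rw [iterD_succ]
    simp only [Function.comp_apply, ih, iter_map_neg]

lemma iterD_sub {r : ℕ} (ξ : Fin r → Derivation k R R) (n : Fin r → ℕ) (x y : R) :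
    iterD ξ n (x - y) = iterD ξ n x - iterD ξ n y := by
  rw [sub_eq_add_neg, iterD_add, iterD_neg, sub_eq_add_neg]

lemma iterD_sum {r : ℕ} (ξ : Fin r → Derivation k R R) (n : Fin r → ℕ)
    {ι : Type*} (s : Finset ι) (g : ι → R) :
    iterD ξ n (∑ a ∈ s, g a) = ∑ a ∈ s, iterD ξ n (g a) := by
  induction s using Finset.cons_induction with
  | empty => simp [iterD_zero_apply]
  | cons a s ha ih => rw [Finset.sum_cons, Finset.sum_cons, iterD_add, ih]

lemma iterD_monomial : ∀ {r : ℕ} (ξ : Fin r → Derivation k R R) (f : Fin r → R),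
    (∀ i j, ξ i (f j) = if i = j then 1 else 0) → ∀ (c : R), (∀ i, ξ i c = 0) →
    ∀ (m n : Fin r → ℕ),
    iterD ξ n (c * ∏ i, f i ^ m i) =
      (∏ i, (m i).descFactorial (n i)) • (c * ∏ i, f i ^ (m i - n i)) := by
  intro r
  induction r with
  | zero =>
    intro ξ f hf c hc m n
    simp [iterD_nil]
  | succ r ih =>
    intro ξ f hf c hc m n
    have tail_hf : ∀ i j : Fin r, (ξ i.succ) (f j.succ) = if i = j then 1 else 0 := by
      intro i j; rw [hf]; simp [Fin.succ_inj]
    have hsucc0 : ∀ i : Fin r, ξ i.succ (f 0) = 0 := by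
      intro i; rw [hf]; simp [Fin.succ_ne_zero]
    have h0succ : ∀ j : Fin r, ξ 0 (f j.succ) = 0 := by
      intro j; rw [hf]; simp [(Fin.succ_ne_zero j).symm]
    have hc0 : ∀ i : Fin r, ξ i.succ (c * f 0 ^ m 0) = 0 := by
      intro i
      rw [Derivation.leibniz, D_pow_zero _ _ (hsucc0 i), hc]; simp
    have expand : c * ∏ i, f i ^ m i = (c * f 0 ^ m 0) * ∏ i : Fin r, f i.succ ^ m i.succ := by
      rw [Fin.prod_univ_succ]; ring
    have hc1 : ξ 0 (c * ∏ i : Fin r, f i.succ ^ (m i.succ - n i.succ)) = 0 := by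
      rw [Derivation.leibniz, hc, D_prod_zero _ _ _
        (fun i _ => D_pow_zero _ _ (h0succ i) _)]
      simp
    rw [iterD_succ, Function.comp_apply, expand,
      ih (fun i => ξ i.succ) (fun i => f i.succ) tail_hf (c * f 0 ^ m 0) hc0
        (fun i => m i.succ) (fun i => n i.succ),
      iter_map_nsmul,
      show (c * f 0 ^ m 0) * ∏ i : Fin r, f i.succ ^ (m i.succ - n i.succ)
          = (c * ∏ i : Fin r, f i.succ ^ (m i.succ - n i.succ)) * f 0 ^ m 0 by ring,
      iter_single (ξ 0) hc1 (by rw [hf]; simp) (m 0) (n 0)]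
    rw [Fin.prod_univ_succ (fun i => (m i).descFactorial (n i)),
      Fin.prod_univ_succ (fun i => f i ^ (m i - n i))]
    simp only [nsmul_eq_mul, Nat.cast_mul]
    ring

lemma deriv_iterD : ∀ {r : ℕ} (ξ : Fin r → Derivation k R R),
    (∀ i j, ∀ g : R, ξ i (ξ j g) = ξ j (ξ i g)) →
    ∀ (n : Fin r → ℕ) (i : Fin r) (g : R),
    ξ i (iterD ξ n g) = iterD ξ (Function.update n i (n i + 1)) g := by
  intro r
  induction r with
  | zero => intro _ _ _ i; exact i.elim0
  | succ r ih =>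
    intro ξ hcomm n i g
    induction i using Fin.cases with
    | zero =>
      have h2 : (fun j : Fin r => Function.update n 0 (n 0 + 1) j.succ) = fun j => n j.succ := by
        funext j; exact Function.update_of_ne (Fin.succ_ne_zero j) _ _
      rw [iterD_succ, iterD_succ, Function.comp_apply, Function.comp_apply, h2,
        Function.update_self, Function.iterate_succ_apply']
    | succ j =>
      have tail_update : (fun i : Fin r => Function.update n j.succ (n j.succ + 1) i.succ)
          = Function.update (fun i => n i.succ) j (n j.succ + 1) := by
        funext i
        rcases eq_or_ne i j with rfl | h
        · simp
        · rw [Function.update_of_ne h, Function.update_of_ne (by simpa [Fin.succ_inj] using h)]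
      have hhead : Function.update n j.succ (n j.succ + 1) 0 = n 0 :=
        Function.update_of_ne (Fin.succ_ne_zero j).symm _ _
      rw [iterD_succ, iterD_succ, Function.comp_apply, Function.comp_apply, tail_update, hhead,
        comm_iter _ _ (fun x => hcomm j.succ 0 x),
        ih (fun i => ξ i.succ) (fun a b x => hcomm a.succ b.succ x) (fun i => n i.succ) j g]

lemma iterD_zero_exp {r : ℕ} (ξ : Fin r → Derivation k R R) (g : R) :
    iterD ξ (fun _ => 0) g = g := by
  induction r with
  | zero => rfl
  | succ r ih => rw [iterD_succ]; simpa using ih (fun i => ξ i.succ)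

lemma mem_jointKernel {r : ℕ} {ξ : Fin r → Derivation k R R} {g : R} :
    g ∈ jointKernel ξ ↔ ∀ i, ξ i g = 0 := Iff.rfl

-- scalar cancellation
lemma nsmul_cancel (k : Type*) [Field k] [CharZero k] [Algebra k R] {K : ℕ} (hK : K ≠ 0)
    {x : R} (h : K • x = 0) : x = 0 := by
  have hK' : ((K : ℕ) : k) ≠ 0 := Nat.cast_ne_zero.mpr hK
  have h2 : ((K : ℕ) : k) • x = 0 := by rw [Nat.cast_smul_eq_nsmul]; exact h
  have h3 := congrArg (fun y => (((K : ℕ) : k))⁻¹ • y) h2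
  simpa [smul_smul, inv_mul_cancel₀ hK'] using h3


set_option synthInstance.maxHeartbeats 1000000 in
set_option maxHeartbeats 1000000 in
open MvPolynomial in
/-- Let `k` have characteristic zero, `R` be a commutative
`k`-algebra and `ξ_1, …, ξ_r` pairwise commuting `k`-derivations of `R` that are
jointly locally nilpotent.  If `f_1, …, f_r ∈ R` satisfy `ξ_i f_j = δ_ij`, then
the `R₀`-algebra homomorphism `R₀[t_1, …, t_r] → R`, `t_i ↦ f_i`, is an
isomorphism, where `R₀` is the joint kernel of the `ξ_i`. -/
theorem statement6 {r : ℕ} (ξ : Fin r → Derivation k R R)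
    (hcomm : ∀ i j, ∀ g : R, ξ i (ξ j g) = ξ j (ξ i g))
    (hnil : ∀ g : R, ∃ N : ℕ, ∀ n : Fin r → ℕ, N < ∑ i, n i → iterD ξ n g = 0)
    (f : Fin r → R) (hf : ∀ i j, ξ i (f j) = if i = j then 1 else 0) :
    Function.Bijective ⇑(MvPolynomial.aeval (R := ↥(jointKernel ξ)) f) := by
  constructor
  · -- injectivity
    rw [injective_iff_map_eq_zero]
    intro p hp
    by_contra hne
    have hsupp : p.support.Nonempty := support_nonempty.mpr hne
    obtain ⟨n, hn, hmax⟩ := p.support.exists_max_image (fun m => ∑ i, m i) hsupp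
    have hexp : (aeval (R := ↥(jointKernel ξ)) f) p
        = ∑ m ∈ p.support, ((((coeff m p) : ↥(jointKernel ξ)) : R) * ∏ i, f i ^ m i) := by
      conv_lhs => rw [as_sum p]
      rw [map_sum]
      refine Finset.sum_congr rfl fun m hm => ?_
      rw [aeval_monomial, Finsupp.prod_pow]
      rfl
    have h0 : iterD ξ ⇑n ((aeval (R := ↥(jointKernel ξ)) f) p)
        = (∏ i, (n i).factorial) • ((((coeff n p) : ↥(jointKernel ξ)) : R)) := by
      rw [hexp, iterD_sum]
      rw [Finset.sum_eq_single n]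
      · rw [iterD_monomial ξ f hf _ (fun i => (coeff n p).2 i)]
        simp [Nat.descFactorial_self]
      · intro m hm hmne
        rw [iterD_monomial ξ f hf _ (fun i => (coeff m p).2 i)]
        have : ∃ i, m i < n i := by
          by_contra hcon
          push_neg at hcon
          have hsum : ∑ i, n i = ∑ i, m i :=
            le_antisymm (Finset.sum_le_sum fun i _ => hcon i) (hmax m hm)
          have : ∀ i ∈ Finset.univ, n i = m i :=
            (Finset.sum_eq_sum_iff_of_le fun i _ => hcon i).mp hsum
          exact hmne (Finsupp.ext fun i => ((this i (Finset.mem_univ i)).symm))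
        obtain ⟨i, hi⟩ := this
        rw [Finset.prod_eq_zero (Finset.mem_univ i)
          (Nat.descFactorial_eq_zero_iff_lt.mpr hi), zero_smul]
      · intro hnn; exact absurd hn hnn
    rw [hp, iterD_zero_apply] at h0
    have hzero : (((coeff n p) : ↥(jointKernel ξ)) : R) = 0 := by
      refine nsmul_cancel k ?_ h0.symm
      exact (Finset.prod_pos fun i _ => (n i).factorial_pos).ne'
    exact (mem_support_iff.mp hn) (Subtype.ext hzero)
  · -- surjectivity
    have key : ∀ N : ℕ, ∀ g : R, (∀ n : Fin r → ℕ, N < ∑ i, n i → iterD ξ n g = 0) →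
        ∃ p : MvPolynomial (Fin r) ↥(jointKernel ξ), (aeval f) p = g := by
      intro N
      induction N with
      | zero =>
        intro g hg
        have hg0 : ∀ i, ξ i g = 0 := by
          intro i
          have h1 := deriv_iterD ξ hcomm (fun _ => 0) i g
          rw [iterD_zero_exp] at h1
          rw [h1, hg]
          rw [Finset.sum_update_of_mem (Finset.mem_univ i)]
          simp
        exact ⟨C ⟨g, hg0⟩, by rw [aeval_C]; rfl⟩
      | succ N ih =>
        intro g hg
        set S : Finset (Fin r → ℕ) :=
          (Fintype.piFinset fun _ : Fin r => Finset.range (N + 2)).filter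
            (fun n => ∑ i, n i = N + 1) with hS
        have hmemS : ∀ n : Fin r → ℕ, (∑ i, n i = N + 1) → n ∈ S := by
          intro n hn
          rw [hS, Finset.mem_filter]
          refine ⟨Fintype.mem_piFinset.mpr fun i => Finset.mem_range.mpr ?_, hn⟩
          have : n i ≤ ∑ j, n j := Finset.single_le_sum (fun j _ => Nat.zero_le _) (Finset.mem_univ i)
          omega
        have hsumS : ∀ n ∈ S, ∑ i, n i = N + 1 := fun n hn => (Finset.mem_filter.mp hn).2
        have hker : ∀ n ∈ S, ∀ i, ξ i (iterD ξ n g) = 0 := by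
          intro n hn i
          rw [deriv_iterD ξ hcomm n i g]
          apply hg
          rw [Finset.sum_update_of_mem (Finset.mem_univ i)]
          have h3 : ∑ j, n j = ∑ j ∈ Finset.univ \ {i}, n j + n i :=
            Finset.sum_eq_sum_sdiff_singleton_add (Finset.mem_univ i) n
          have h2 := hsumS n hn
          omega
        set d : (Fin r → ℕ) → R := fun n =>
          algebraMap k R (((∏ i, (n i).factorial : ℕ) : k))⁻¹ * iterD ξ n g with hd
        have hdker : ∀ n ∈ S, ∀ i, ξ i (d n) = 0 := by
          intro n hn i
          rw [hd]
          simp only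
          rw [Derivation.leibniz, hker n hn i, Derivation.map_algebraMap]
          simp
        set h : R := g - ∑ n ∈ S, d n * ∏ i, f i ^ n i with hh
        have hbound : ∀ m : Fin r → ℕ, N < ∑ i, m i → iterD ξ m h = 0 := by
          intro m hm
          rw [hh, iterD_sub, iterD_sum]
          rcases eq_or_lt_of_le (Nat.succ_le_of_lt hm) with hcase | hcase
          · -- ∑ m = N + 1
            have hmS : m ∈ S := hmemS m hcase.symm
            rw [Finset.sum_eq_single m]
            · rw [iterD_monomial ξ f hf _ (hdker m hmS) m m]
              simp only [Nat.descFactorial_self, Nat.sub_self, pow_zero,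
                Finset.prod_const_one, mul_one]
              have hKpos : (0:ℕ) < ∏ i, (m i).factorial :=
                Finset.prod_pos fun i _ => (m i).factorial_pos
              have : (∏ i, (m i).factorial) • d m = iterD ξ m g := by
                rw [hd]
                simp only
                rw [nsmul_eq_mul, ← mul_assoc]
                rw [show ((∏ i, (m i).factorial : ℕ) : R)
                    = algebraMap k R ((∏ i, (m i).factorial : ℕ) : k) by
                  rw [map_natCast]]
                rw [← map_mul, mul_inv_cancel₀ (Nat.cast_ne_zero.mpr hKpos.ne')]
                simp
              rw [this, sub_self]
            · intro n hn hne
              rw [iterD_monomial ξ f hf _ (hdker n hn) n m]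
              have : ∃ i, n i < m i := by
                by_contra hcon
                push_neg at hcon
                have h1 : ∑ i, m i ≤ ∑ i, n i := Finset.sum_le_sum fun i _ => hcon i
                have h2 := hsumS n hn
                have : ∀ i ∈ Finset.univ, m i = n i :=
                  (Finset.sum_eq_sum_iff_of_le fun i _ => hcon i).mp (by omega)
                exact hne (funext fun i => ((this i (Finset.mem_univ i))).symm)
              obtain ⟨i, hi⟩ := this
              rw [Finset.prod_eq_zero (Finset.mem_univ i)
                (Nat.descFactorial_eq_zero_iff_lt.mpr hi), zero_smul]
            · intro hmn; exact absurd hmS hmn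
          · -- N + 1 < ∑ m
            rw [hg m hcase]
            rw [Finset.sum_eq_zero, sub_self]
            intro n hn
            rw [iterD_monomial ξ f hf _ (hdker n hn) n m]
            have : ∃ i, n i < m i := by
              by_contra hcon
              push_neg at hcon
              have h1 : ∑ i, m i ≤ ∑ i, n i := Finset.sum_le_sum fun i _ => hcon i
              have h2 := hsumS n hn
              omega
            obtain ⟨i, hi⟩ := this
            rw [Finset.prod_eq_zero (Finset.mem_univ i)
              (Nat.descFactorial_eq_zero_iff_lt.mpr hi), zero_smul]
        obtain ⟨p, hp⟩ := ih h hbound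
        refine ⟨p + ∑ n ∈ S.attach, C (⟨d n.1, fun i => hdker n.1 n.2 i⟩ : ↥(jointKernel ξ))
          * ∏ i, X i ^ n.1 i, ?_⟩
        rw [map_add, hp, map_sum]
        have : ∀ n ∈ S.attach, (aeval f) (C (⟨d n.1, fun i => hdker n.1 n.2 i⟩ : ↥(jointKernel ξ))
            * ∏ i, X i ^ n.1 i) = d n.1 * ∏ i, f i ^ n.1 i := by
          intro n _
          rw [map_mul, aeval_C, map_prod]
          simp only [map_pow, aeval_X]
          rfl
        rw [Finset.sum_congr rfl this, hh]
        rw [← Finset.sum_attach S (fun n => d n * ∏ i, f i ^ n i)]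
        ring
    intro g
    obtain ⟨N, hN⟩ := hnil g
    exact key N g hN
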